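/- Every non-degenerate homomorphism φ: F_Y → F_X with Y finite decomposes as φ = φ' ∘ ψ_k ∘ ⋯ ∘ ψ_1, where each ψ_j is one of the elementary folding morphisms (identity with added restriction, edge-subdivision introducing a new generator, Nielsen transformation x ↦ xy or y ↦ yx, or generator identification), and φ' satisfies: for all distinct letters x ≠ y in the final generating set and its inverses, there is no cancellation in φ'(x)·φ'(y)⁻¹. -/

import Mathlib

/-- Reduced word length of a free group element. -/
def len {α : Type*} [DecidableEq α] (w : FreeGroup α) : ℕ := w.toWord.length

/-- The free group element corresponding to a single letter (generator or inverse). -/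
def lett {α : Type*} (p : α × Bool) : FreeGroup α := FreeGroup.mk [p]

/-- A free group element is cyclically reduced if its last letter is not the
inverse of its first letter. -/
def CyclicallyReduced {α : Type*} [DecidableEq α] (w : FreeGroup α) : Prop :=
  ∀ x ∈ w.toWord.head?, ∀ y ∈ w.toWord.getLast?, y ≠ (x.1, !x.2)

/-- `H` is a free factor of `K`: `K` is the internal free product of `H` with some `L ≤ K`. -/
def IsFreeFactorOf {G : Type*} [Group G] (H K : Subgroup G) : Prop :=
  H ≤ K ∧ ∃ L : Subgroup G, H ⊔ L = K ∧
    Function.Injective (Monoid.Coprod.lift H.subtype L.subtype)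

/-- `H ≤ K` is an algebraic extension: no proper free factor `J` of `K` with `H ≤ J < K`. -/
def IsAlgebraicExtension {G : Type*} [Group G] (H K : Subgroup G) : Prop :=
  H ≤ K ∧ ¬ ∃ J : Subgroup G, IsFreeFactorOf J K ∧ H ≤ J ∧ J < K

/-- The elementary folding morphisms between free groups: identity, a Nielsen
transformation `x ↦ xy`, an edge subdivision introducing a new generator (two
shapes, for `x ≠ y⁻¹` and for `x = y⁻¹`), and identification of two generators. -/
inductive IsFolding : ∀ {A B : Type}, (FreeGroup A →* FreeGroup B) → Prop where
  | ident {A : Type} : IsFolding (MonoidHom.id (FreeGroup A))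
  | nielsen {A : Type} (x y : A × Bool) (hxy : y.1 ≠ x.1)
      (ψ : FreeGroup A →* FreeGroup A)
      (hx : ψ (lett x) = lett x * lett y)
      (hz : ∀ z : A, z ≠ x.1 → ψ (FreeGroup.of z) = FreeGroup.of z) :
      IsFolding ψ
  | subdiv {A : Type} (x y : A × Bool) (hxy : y.1 ≠ x.1)
      (ψ : FreeGroup A →* FreeGroup (A ⊕ Unit))
      (hx : ψ (lett x) = lett (Sum.inl x.1, x.2) * FreeGroup.of (Sum.inr ()))
      (hy : ψ (lett y) = lett (Sum.inl y.1, y.2) * FreeGroup.of (Sum.inr ()))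
      (hz : ∀ z : A, z ≠ x.1 → z ≠ y.1 → ψ (FreeGroup.of z) = FreeGroup.of (Sum.inl z)) :
      IsFolding ψ
  | subdivInv {A : Type} (x : A × Bool)
      (ψ : FreeGroup A →* FreeGroup (A ⊕ Unit))
      (hx : ψ (lett x) = (FreeGroup.of (Sum.inr ()))⁻¹ *
        lett (Sum.inl x.1, x.2) * FreeGroup.of (Sum.inr ()))
      (hz : ∀ z : A, z ≠ x.1 → ψ (FreeGroup.of z) = FreeGroup.of (Sum.inl z)) :
      IsFolding ψ
  | identify {A : Type} (x y : A) (hxy : x ≠ y)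
      (ψ : FreeGroup A →* FreeGroup {z : A // z ≠ y})
      (hx : ψ (FreeGroup.of y) = FreeGroup.of ⟨x, hxy⟩)
      (hz : ∀ z : A, (h : z ≠ y) → ψ (FreeGroup.of z) = FreeGroup.of ⟨z, h⟩) :
      IsFolding ψ

/-- Finite compositions of elementary folding morphisms. -/
inductive IsFoldingSeq : ∀ {A B : Type}, (FreeGroup A →* FreeGroup B) → Prop where
  | refl {A : Type} : IsFoldingSeq (MonoidHom.id (FreeGroup A))
  | step {A B C : Type} (ψ : FreeGroup A →* FreeGroup B) (ρ : FreeGroup B →* FreeGroup C) :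
      IsFolding ψ → IsFoldingSeq ρ → IsFoldingSeq (ρ.comp ψ)

/-!
Induct on the height `∑ y, |φ y|`. If distinct letters `p ≠ q` cancel in `φ p * (φ q)⁻¹`, the
reduced words `φ p` and `φ q` end in the same letter `ℓ`. If `p` and `q` are different generators,
subdividing them by a new generator `t ↦ ℓ` (`p ↦ p' t`, `q ↦ q' t`) peels `ℓ` off both images;
if `q = p⁻¹`, then `φ p` begins with `ℓ⁻¹` and ends with `ℓ`, and the subdivision `p ↦ t⁻¹ p' t`
peels off both ends. Either way the height drops by one, so subdivisions alone suffice.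
-/

open FreeGroup

section Letters

variable {α : Type*}

@[simp]
theorem lett_true (a : α) : lett (a, true) = of a := rfl

@[simp]
theorem lett_false (a : α) : lett (a, false) = (of a)⁻¹ := by
  rw [of, inv_mk]; rfl

theorem lett_inv (x : α × Bool) : (lett x)⁻¹ = lett (x.1, !x.2) := by
  obtain ⟨a, _ | _⟩ := x <;> simp

theorem map_lett {G : Type*} [Group G] (f : FreeGroup α →* G) (x : α × Bool) :
    f (lett x) = cond x.2 (f (of x.1)) (f (of x.1))⁻¹ := by
  obtain ⟨a, _ | _⟩ := x <;> simp

theorem lift_apply_lett_of_apply_eq {G : Type*} [Group G] {f : α → G} {x : α × Bool} {g : G}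
    (h : f x.1 = cond x.2 g g⁻¹) : lift f (lett x) = g := by
  rw [map_lett, lift_apply_of, h]; cases x.2 <;> simp

theorem hom_ext_lett {G : Type*} [Group G] {f g : FreeGroup α →* G}
    (h : ∀ a, ∃ b, f (lett (a, b)) = g (lett (a, b))) : f = g := by
  ext a
  obtain ⟨_ | _, hb⟩ := h a <;> simpa using hb

def updateLett [DecidableEq α] {G : Type*} [Group G] (f : α → G) (x : α × Bool) (g : G) : α → G :=
  Function.update f x.1 (cond x.2 g g⁻¹)

end Letters

section ReducedWords

variable {α : Type*} [DecidableEq α]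

theorem len_inv (w : FreeGroup α) : len w⁻¹ = len w := norm_inv_eq

@[simp]
theorem len_lett (x : α × Bool) : len (lett x) = 1 := by
  simp [len, lett, toWord_mk]

theorem len_map_of_fst {β : Type*} (f : FreeGroup β →* FreeGroup α) (x : β × Bool) :
    len (f (of x.1)) = len (f (lett x)) := by
  rw [map_lett]; cases x.2 <;> simp [len_inv]

theorem toWord_mk_of_infix {L : List (α × Bool)} {w : FreeGroup α} (h : L <:+: w.toWord) :
    (mk L).toWord = L := by
  rw [toWord_mk, (isReduced_toWord.infix h).reduce_eq]

theorem eq_mul_lett_of_getLast?_eq {w : FreeGroup α} {ℓ : α × Bool}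
    (h : w.toWord.getLast? = some ℓ) :
    ∃ u, w = u * lett ℓ ∧ len w = len u + 1 := by
  obtain ⟨L, hL⟩ := List.getLast?_eq_some_iff.mp h
  have hu : (mk L).toWord = L := toWord_mk_of_infix (hL ▸ List.prefix_append _ _).isInfix
  refine ⟨mk L, ?_, ?_⟩
  · rw [← mk_toWord (x := w), hL, lett, mul_mk]
  · rw [len, len, hL, hu, List.length_append, List.length_singleton]

theorem eq_lett_inv_mul_mul_lett {w : FreeGroup α} {ℓ : α × Bool}
    (hlast : w.toWord.getLast? = some ℓ) (hhead : w.toWord.head? = some (ℓ.1, !ℓ.2)) :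
    ∃ m, w = (lett ℓ)⁻¹ * m * lett ℓ ∧ len w = len m + 2 := by
  obtain ⟨L, hL⟩ := List.getLast?_eq_some_iff.mp hlast
  obtain _ | ⟨c, M⟩ := L
  · obtain ⟨ℓ₁, ℓ₂⟩ := ℓ
    cases ℓ₂ <;> simp [hL] at hhead
  obtain rfl : c = (ℓ.1, !ℓ.2) := by simpa [hL] using hhead
  have hm : (mk M).toWord = M := toWord_mk_of_infix ⟨[(ℓ.1, !ℓ.2)], [ℓ], by rw [hL]; simp⟩
  refine ⟨mk M, ?_, ?_⟩
  · rw [← mk_toWord (x := w), hL, lett_inv, lett, lett, mul_mk, mul_mk]; simp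
  · rw [len, len, hL, hm]; simp

theorem exists_getLast?_eq_of_len_mul_inv_ne {u v : FreeGroup α}
    (h : len (u * v⁻¹) ≠ len u + len v) :
    ∃ ℓ, u.toWord.getLast? = some ℓ ∧ v.toWord.getLast? = some ℓ := by
  by_contra! hne
  refine h ?_
  have hred : IsReduced (u.toWord ++ v⁻¹.toWord) := by
    refine List.isChain_append.mpr ⟨isReduced_toWord, isReduced_toWord, ?_⟩
    intro a ha b hb
    rw [toWord_inv, invRev, List.head?_reverse, List.getLast?_map] at hb
    obtain ⟨c, hc, rfl⟩ := Option.map_eq_some_iff.mp hb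
    intro h1
    by_contra h2
    exact hne a ha (by rwa [show a = c from Prod.ext h1 (by simpa using h2)])
  rw [len, toWord_mul, hred.reduce_eq, List.length_append, toWord_inv, invRev_length]
  rfl

theorem getLast?_toWord_inv (w : FreeGroup α) :
    w⁻¹.toWord.getLast? = w.toWord.head?.map fun a => (a.1, !a.2) := by
  rw [toWord_inv, invRev, List.getLast?_reverse, List.head?_map]

end ReducedWords

section Folding

variable {X : Type} [DecidableEq X]

noncomputable def height {A : Type} (φ : FreeGroup A →* FreeGroup X) : ℕ := ∑ᶠ a, len (φ (of a))

def NoCancellation {A : Type} (φ : FreeGroup A →* FreeGroup X) : Prop :=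
  ∀ p q : A × Bool, p ≠ q →
    len (φ (lett p) * (φ (lett q))⁻¹) = len (φ (lett p)) + len (φ (lett q))

def HasLoweringFold {A : Type} (φ : FreeGroup A →* FreeGroup X) : Prop :=
  ∃ (B : Type) (_ : Finite B) (ψ : FreeGroup A →* FreeGroup B) (φ₂ : FreeGroup B →* FreeGroup X),
    IsFolding ψ ∧ φ = φ₂.comp ψ ∧ height φ₂ < height φ

theorem height_lt_of_subdiv {A : Type} [Fintype A] {φ : FreeGroup A →* FreeGroup X}
    {φ₂ : FreeGroup (A ⊕ Unit) →* FreeGroup X} (d : A → ℕ) (hd : ∑ a, d a = 2)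
    (hlen : ∀ a, len (φ₂ (of (.inl a))) + d a = len (φ (of a)))
    (ht : len (φ₂ (of (.inr ()))) = 1) : height φ₂ < height φ := by
  simp only [height, finsum_eq_sum_of_fintype]
  rw [Fintype.sum_sum_type, ← Finset.sum_congr rfl fun a _ => hlen a, Finset.sum_add_distrib]
  simp [ht, hd]

theorem hasLoweringFold_of_subdiv {A : Type} [Finite A] (φ : FreeGroup A →* FreeGroup X)
    {p q : A × Bool} (hpq : q.1 ≠ p.1) {u v : FreeGroup X} {ℓ : X × Bool}
    (hu : φ (lett p) = u * lett ℓ) (hlu : len (φ (lett p)) = len u + 1)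
    (hv : φ (lett q) = v * lett ℓ) (hlv : len (φ (lett q)) = len v + 1) :
    HasLoweringFold φ := by
  classical
  have := Fintype.ofFinite A
  set t : FreeGroup (A ⊕ Unit) := of (.inr ())
  set ψ : FreeGroup A →* FreeGroup (A ⊕ Unit) := lift <|
    updateLett (updateLett (of ∘ .inl) p (lett (.inl p.1, p.2) * t)) q (lett (.inl q.1, q.2) * t)
  set φ₂ : FreeGroup (A ⊕ Unit) →* FreeGroup X := lift <|
    Sum.elim (updateLett (updateLett (φ ∘ of) p u) q v) fun _ => lett ℓ
  have hψp : ψ (lett p) = lett (.inl p.1, p.2) * t :=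
    lift_apply_lett_of_apply_eq (by simp [updateLett, hpq.symm])
  have hψq : ψ (lett q) = lett (.inl q.1, q.2) * t :=
    lift_apply_lett_of_apply_eq (by simp [updateLett])
  have hφ₂p : φ₂ (lett (.inl p.1, p.2)) = u :=
    lift_apply_lett_of_apply_eq (by simp [updateLett, hpq.symm])
  have hφ₂q : φ₂ (lett (.inl q.1, q.2)) = v :=
    lift_apply_lett_of_apply_eq (by simp [updateLett])
  have hφ₂t : φ₂ t = lett ℓ := lift_apply_of
  have hrest : ∀ a, a ≠ p.1 → a ≠ q.1 →
      ψ (of a) = of (.inl a) ∧ φ₂ (of (.inl a)) = φ (of a) := by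
    intro a hap haq
    constructor
    · show lift _ (of a) = _
      rw [lift_apply_of, updateLett, Function.update_of_ne haq, updateLett,
        Function.update_of_ne hap, Function.comp_apply]
    · show lift _ (of (Sum.inl a)) = _
      rw [lift_apply_of, Sum.elim_inl, updateLett, Function.update_of_ne haq, updateLett,
        Function.update_of_ne hap, Function.comp_apply]
  refine ⟨A ⊕ Unit, inferInstance, ψ, φ₂,
    .subdiv p q hpq ψ hψp hψq fun a hap haq => (hrest a hap haq).1, ?_, ?_⟩
  · refine hom_ext_lett fun a => ?_
    by_cases hap : a = p.1
    · subst hap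
      exact ⟨p.2, by simp [hu, hψp, hφ₂p, hφ₂t]⟩
    by_cases haq : a = q.1
    · subst haq
      exact ⟨q.2, by simp [hv, hψq, hφ₂q, hφ₂t]⟩
    exact ⟨true, by simp [(hrest a hap haq).1, (hrest a hap haq).2]⟩
  · refine height_lt_of_subdiv (Pi.single p.1 1 + Pi.single q.1 1)
      (by simp [Finset.sum_add_distrib]) (fun a => ?_) (by rw [hφ₂t, len_lett])
    by_cases hap : a = p.1
    · subst hap
      rw [len_map_of_fst φ p, len_map_of_fst φ₂ (Sum.inl p.1, p.2), hφ₂p, hlu]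
      simp [hpq.symm]
    by_cases haq : a = q.1
    · subst haq
      rw [len_map_of_fst φ q, len_map_of_fst φ₂ (Sum.inl q.1, q.2), hφ₂q, hlv]
      simp [hap]
    rw [(hrest a hap haq).2]
    simp [hap, haq]

theorem hasLoweringFold_of_subdivInv {A : Type} [Finite A] (φ : FreeGroup A →* FreeGroup X)
    {p : A × Bool} {m : FreeGroup X} {ℓ : X × Bool}
    (hu : φ (lett p) = (lett ℓ)⁻¹ * m * lett ℓ) (hlu : len (φ (lett p)) = len m + 2) :
    HasLoweringFold φ := by
  classical
  have := Fintype.ofFinite A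
  set t : FreeGroup (A ⊕ Unit) := of (.inr ())
  set ψ : FreeGroup A →* FreeGroup (A ⊕ Unit) := lift <|
    updateLett (of ∘ .inl) p (t⁻¹ * lett (.inl p.1, p.2) * t)
  set φ₂ : FreeGroup (A ⊕ Unit) →* FreeGroup X := lift <|
    Sum.elim (updateLett (φ ∘ of) p m) fun _ => lett ℓ
  have hψp : ψ (lett p) = t⁻¹ * lett (.inl p.1, p.2) * t :=
    lift_apply_lett_of_apply_eq (by simp [updateLett])
  have hφ₂p : φ₂ (lett (.inl p.1, p.2)) = m :=
    lift_apply_lett_of_apply_eq (by simp [updateLett])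
  have hφ₂t : φ₂ t = lett ℓ := lift_apply_of
  have hrest : ∀ a, a ≠ p.1 → ψ (of a) = of (.inl a) ∧ φ₂ (of (.inl a)) = φ (of a) := by
    intro a hap
    constructor
    · show lift _ (of a) = _
      rw [lift_apply_of, updateLett, Function.update_of_ne hap, Function.comp_apply]
    · show lift _ (of (Sum.inl a)) = _
      rw [lift_apply_of, Sum.elim_inl, updateLett, Function.update_of_ne hap, Function.comp_apply]
  refine ⟨A ⊕ Unit, inferInstance, ψ, φ₂, .subdivInv p ψ hψp fun a hap => (hrest a hap).1, ?_, ?_⟩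
  · refine hom_ext_lett fun a => ?_
    by_cases hap : a = p.1
    · subst hap
      exact ⟨p.2, by simp [hu, hψp, hφ₂p, hφ₂t]⟩
    exact ⟨true, by simp [(hrest a hap).1, (hrest a hap).2]⟩
  · refine height_lt_of_subdiv (Pi.single p.1 2) (by simp) (fun a => ?_) (by rw [hφ₂t, len_lett])
    by_cases hap : a = p.1
    · subst hap
      rw [len_map_of_fst φ p, len_map_of_fst φ₂ (Sum.inl p.1, p.2), hφ₂p, hlu]
      simp
    rw [(hrest a hap).2]
    simp [hap]

theorem hasLoweringFold_of_not_noCancellation {A : Type} [Finite A]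
    {φ : FreeGroup A →* FreeGroup X} (h : ¬ NoCancellation φ) : HasLoweringFold φ := by
  simp only [NoCancellation, not_forall] at h
  obtain ⟨p, q, hpq, hne⟩ := h
  obtain ⟨ℓ, hu, hv⟩ := exists_getLast?_eq_of_len_mul_inv_ne hne
  by_cases hpq₁ : q.1 = p.1
  · have hq : lett q = (lett p)⁻¹ := by
      rw [lett_inv]
      congr
      obtain ⟨a, _ | _⟩ := p <;> obtain ⟨b, _ | _⟩ := q <;> simp_all
    rw [hq, MonoidHom.map_inv, getLast?_toWord_inv, Option.map_eq_some_iff] at hv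
    obtain ⟨c, hc, rfl⟩ := hv
    obtain ⟨m, hm, hlm⟩ := eq_lett_inv_mul_mul_lett hu (by simpa using hc)
    exact hasLoweringFold_of_subdivInv φ hm hlm
  · obtain ⟨u, hu, hlu⟩ := eq_mul_lett_of_getLast?_eq hu
    obtain ⟨v, hv, hlv⟩ := eq_mul_lett_of_getLast?_eq hv
    exact hasLoweringFold_of_subdiv φ hpq₁ hu hlu hv hlv

theorem exists_foldingSeq_noCancellation {A : Type} [Finite A] (φ : FreeGroup A →* FreeGroup X) :
    ∃ (Z : Type) (_ : Finite Z) (ψ : FreeGroup A →* FreeGroup Z)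
      (φ' : FreeGroup Z →* FreeGroup X), IsFoldingSeq ψ ∧ φ = φ'.comp ψ ∧ NoCancellation φ' := by
  induction hn : height φ using Nat.strong_induction_on generalizing A with
  | _ n ih =>
  by_cases h : NoCancellation φ
  · exact ⟨A, ‹_›, MonoidHom.id _, φ, .refl, φ.comp_id.symm, h⟩
  obtain ⟨B, _, ψ, φ₂, hψ, rfl, hlt⟩ := hasLoweringFold_of_not_noCancellation h
  obtain ⟨Z, _, ρ, φ', hρ, rfl, hφ'⟩ := ih _ (hn ▸ hlt) φ₂ rfl
  exact ⟨Z, ‹_›, ρ.comp ψ, φ', .step ψ ρ hψ hρ, (MonoidHom.comp_assoc ψ ρ φ').symm, hφ'⟩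

end Folding

theorem stmt_14_general (Y X : Type) [Finite Y] [DecidableEq X]
    (φ : FreeGroup Y →* FreeGroup X) :
    ∃ (Z : Type) (_ : Finite Z) (ψ : FreeGroup Y →* FreeGroup Z)
      (φ' : FreeGroup Z →* FreeGroup X),
      IsFoldingSeq ψ ∧ φ = φ'.comp ψ ∧
      ∀ p q : Z × Bool, p ≠ q →
        len (φ' (lett p) * (φ' (lett q))⁻¹) = len (φ' (lett p)) + len (φ' (lett q)) :=
  exists_foldingSeq_noCancellation φ

theorem stmt_14 (Y X : Type) [Finite Y] [DecidableEq X]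
    (φ : FreeGroup Y →* FreeGroup X) (hφ : ∀ y : Y, φ (FreeGroup.of y) ≠ 1) :
    ∃ (Z : Type) (_ : Finite Z) (ψ : FreeGroup Y →* FreeGroup Z)
      (φ' : FreeGroup Z →* FreeGroup X),
      IsFoldingSeq ψ ∧ φ = φ'.comp ψ ∧
      ∀ p q : Z × Bool, p ≠ q →
        len (φ' (lett p) * (φ' (lett q))⁻¹) = len (φ' (lett p)) + len (φ' (lett q)) :=
  stmt_14_general Y X φ
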